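/- The function F : ℝ² → ℝ defined by F(h,ℓ) = ∫_{−1}^{1} √(max(2(h−x)(1−x²) − ℓ², 0))/(1−x²) dx is continuous on all of ℝ². -/
import Mathlib


open MeasureTheory intervalIntegral

lemma bound_integrable_aux :
    IntervalIntegrable (fun x : ℝ => (1 + x) ^ (-(1/2) : ℝ) + (1 - x) ^ (-(1/2) : ℝ))
      volume (-1) 1 := by
  have h0 : IntervalIntegrable (fun x : ℝ => x ^ (-(1/2) : ℝ)) volume 0 2 :=
    intervalIntegrable_rpow' (by norm_num)
  have h1 := h0.comp_add_right 1
  have h2 := h0.comp_sub_left 1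
  norm_num at h1 h2
  have h1' : IntervalIntegrable (fun x : ℝ => (1 + x) ^ (-(1/2) : ℝ)) volume (-1) 1 := by
    simpa [add_comm] using h1
  exact h1'.add h2.symm

lemma one_div_sqrt_le (x : ℝ) (hx : x ∈ Set.Ioo (-1 : ℝ) 1) :
    1 / Real.sqrt (1 - x ^ 2) ≤ (1 + x) ^ (-(1/2) : ℝ) + (1 - x) ^ (-(1/2) : ℝ) := by
  obtain ⟨hx1, hx2⟩ := hx
  have ha : (0:ℝ) < 1 + x := by linarith
  have hb : (0:ℝ) < 1 - x := by linarith
  have hfact : (1 : ℝ) - x ^ 2 = (1 + x) * (1 - x) := by ring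
  have key : 1 / Real.sqrt (1 - x ^ 2)
      = (1 + x) ^ (-(1/2) : ℝ) * (1 - x) ^ (-(1/2) : ℝ) := by
    rw [hfact, Real.sqrt_eq_rpow, one_div,
      ← Real.rpow_neg (by positivity : (0:ℝ) ≤ (1+x)*(1-x)),
      Real.mul_rpow ha.le hb.le]
  rw [key]
  have hA : (0:ℝ) ≤ (1 + x) ^ (-(1/2) : ℝ) := Real.rpow_nonneg ha.le _
  have hB : (0:ℝ) ≤ (1 - x) ^ (-(1/2) : ℝ) := Real.rpow_nonneg hb.le _
  rcases le_total 0 x with hx0 | hx0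
  · have h1 : (1 + x) ^ (-(1/2) : ℝ) ≤ 1 :=
      Real.rpow_le_one_of_one_le_of_nonpos (by linarith) (by norm_num)
    nlinarith
  · have h1 : (1 - x) ^ (-(1/2) : ℝ) ≤ 1 :=
      Real.rpow_le_one_of_one_le_of_nonpos (by linarith) (by norm_num)
    nlinarith

theorem action_continuous :
    Continuous (fun p : ℝ × ℝ =>
      ∫ x in (-1 : ℝ)..1,
        Real.sqrt (max (2 * (p.1 - x) * (1 - x ^ 2) - p.2 ^ 2) 0) / (1 - x ^ 2)) := by
  rw [continuous_iff_continuousAt]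
  intro p₀
  set C : ℝ := Real.sqrt (2 * (|p₀.1| + 2)) with hCdef
  have hC : 0 ≤ C := Real.sqrt_nonneg _
  apply intervalIntegral.continuousAt_of_dominated_interval
    (bound := fun x => C * ((1 + x) ^ (-(1/2) : ℝ) + (1 - x) ^ (-(1/2) : ℝ)))
  · filter_upwards with p
    apply Measurable.aestronglyMeasurable
    apply Measurable.div
    · exact (Real.continuous_sqrt.comp ((by fun_prop :
        Continuous fun x : ℝ => 2 * (p.1 - x) * (1 - x ^ 2) - p.2 ^ 2).max
        continuous_const)).measurable
    · fun_prop
  · filter_upwards [Metric.ball_mem_nhds p₀ one_pos] with p hp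
    have hp1 : |p.1| ≤ |p₀.1| + 1 := by
      have hd : |p.1 - p₀.1| < 1 := by
        have h1 : dist p.1 p₀.1 ≤ dist p p₀ := by
          rw [Prod.dist_eq]; exact le_max_left _ _
        rw [Real.dist_eq] at h1
        exact lt_of_le_of_lt h1 (Metric.mem_ball.mp hp)
      have := abs_sub_abs_le_abs_sub p.1 p₀.1
      linarith
    filter_upwards with t ht
    rw [Set.uIoc_of_le (by norm_num : (-1:ℝ) ≤ 1)] at ht
    rcases eq_or_lt_of_le ht.2 with h1 | h1
    · -- t = 1 endpoint
      have ht1 : t = 1 := h1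
      subst ht1
      have : (2 * (p.1 - 1) * (1 - (1:ℝ) ^ 2) - p.2 ^ 2) ≤ 0 := by nlinarith [sq_nonneg p.2]
      rw [max_eq_right this]
      simp only [Real.sqrt_zero, zero_div, norm_zero]
      positivity
    · have hta : (-1:ℝ) < t := ht.1
      have htb : t < 1 := h1
      have hpos : (0:ℝ) < 1 - t ^ 2 := by nlinarith
      have hnum : max (2 * (p.1 - t) * (1 - t ^ 2) - p.2 ^ 2) 0
          ≤ 2 * (|p₀.1| + 2) * (1 - t ^ 2) := by
        rcases le_or_gt (2 * (p.1 - t) * (1 - t ^ 2) - p.2 ^ 2) 0 with h | h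
        · rw [max_eq_right h]; positivity
        · rw [max_eq_left h.le]
          have h2 : p.1 - t ≤ |p₀.1| + 2 := by
            have := abs_le.mp (le_refl |p.1|) |>.2
            have h3 := (abs_le.mp (le_refl |p.1|)).1
            have h4 := le_abs_self p.1
            nlinarith [hp1, le_abs_self p.1, neg_abs_le p.1]
          nlinarith [sq_nonneg p.2]
      have hsq : Real.sqrt (max (2 * (p.1 - t) * (1 - t ^ 2) - p.2 ^ 2) 0)
          ≤ C * Real.sqrt (1 - t ^ 2) := by
        calc Real.sqrt (max (2 * (p.1 - t) * (1 - t ^ 2) - p.2 ^ 2) 0)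
            ≤ Real.sqrt (2 * (|p₀.1| + 2) * (1 - t ^ 2)) := Real.sqrt_le_sqrt hnum
          _ = C * Real.sqrt (1 - t ^ 2) := Real.sqrt_mul (by positivity) _
      have hnn : (0:ℝ) ≤ Real.sqrt (max (2 * (p.1 - t) * (1 - t ^ 2) - p.2 ^ 2) 0) / (1 - t ^ 2) := by
        positivity
      rw [Real.norm_of_nonneg hnn]
      have step : Real.sqrt (max (2 * (p.1 - t) * (1 - t ^ 2) - p.2 ^ 2) 0) / (1 - t ^ 2)
          ≤ C * (1 / Real.sqrt (1 - t ^ 2)) := by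
        rw [div_le_iff₀ hpos]
        calc Real.sqrt (max (2 * (p.1 - t) * (1 - t ^ 2) - p.2 ^ 2) 0)
            ≤ C * Real.sqrt (1 - t ^ 2) := hsq
          _ = C * (1 / Real.sqrt (1 - t ^ 2)) * (1 - t ^ 2) := by
              rw [mul_assoc, one_div, inv_mul_eq_div, Real.div_sqrt]
      calc _ ≤ C * (1 / Real.sqrt (1 - t ^ 2)) := step
        _ ≤ C * ((1 + t) ^ (-(1/2) : ℝ) + (1 - t) ^ (-(1/2) : ℝ)) :=
            mul_le_mul_of_nonneg_left (one_div_sqrt_le t ⟨hta, htb⟩) hC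
  · exact bound_integrable_aux.const_mul C
  · filter_upwards with t _
    exact ((Real.continuous_sqrt.comp ((by fun_prop :
        Continuous fun p : ℝ × ℝ => 2 * (p.1 - t) * (1 - t ^ 2) - p.2 ^ 2).max
        continuous_const)).div_const _).continuousAt
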